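/- Suppose a Markov kernel T has invariant distribution π and satisfies the geometric convergence bound ‖Tⁿ(θ₀,·) − π‖_TV ≤ ρⁿ for some ρ ∈ (0,1). Suppose T̂ is another Markov kernel with sup_θ ‖T(θ,·) − T̂(θ,·)‖_TV ≤ ε. Then for all n ≥ 1, ‖T̂ⁿ(θ₀,·) − π‖_TV ≤ ρⁿ + n·ε. -/

import Mathlib

/-!
Induct on `n`, comparing `T̂ⁿ⁺¹(θ₀,·)` with `Tⁿ⁺¹(θ₀,·)` through `T ∘ₘ T̂ⁿ(θ₀,·)`: one perturbed
step costs at most `ε`, and applying the Markov kernel `T` to two laws does not increase their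
total variation distance (a Hahn decomposition argument). This gives `‖T̂ⁿ(θ₀,·) − Tⁿ(θ₀,·)‖ ≤ nε`,
and the triangle inequality with the geometric bound for `T` finishes.
-/

open MeasureTheory ProbabilityTheory
open scoped ENNReal

/-- Total variation distance between two measures. -/
noncomputable def tvDist {Θ : Type*} [MeasurableSpace Θ] (μ ν : Measure Θ) : ℝ :=
  ⨆ A : {A : Set Θ // MeasurableSet A}, |(μ A).toReal - (ν A).toReal|

/-- `nStep T n` is the `n`-step transition kernel obtained by iterating `T`. -/
noncomputable def nStep {Θ : Type*} [MeasurableSpace Θ] (T : Kernel Θ Θ) : ℕ → Kernel Θ Θ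
  | 0 => Kernel.id
  | n + 1 => T ∘ₖ nStep T n

section TotalVariation

variable {Θ : Type*} [MeasurableSpace Θ] (μ ν : Measure Θ)

lemma bddAbove_range_abs_sub_toReal [IsFiniteMeasure μ] [IsFiniteMeasure ν] :
    BddAbove (Set.range fun A : {A : Set Θ // MeasurableSet A} =>
      |(μ A).toReal - (ν A).toReal|) := by
  refine ⟨(μ Set.univ).toReal + (ν Set.univ).toReal, ?_⟩
  rintro _ ⟨A, rfl⟩
  calc |(μ A).toReal - (ν A).toReal| ≤ |(μ A).toReal| + |(ν A).toReal| := abs_sub _ _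
    _ ≤ (μ Set.univ).toReal + (ν Set.univ).toReal := by
      simp only [ENNReal.abs_toReal]
      exact add_le_add (measureReal_mono (Set.subset_univ _))
        (measureReal_mono (Set.subset_univ _))

lemma tvDist_le_iff [IsFiniteMeasure μ] [IsFiniteMeasure ν] {c : ℝ} (hc : 0 ≤ c) :
    tvDist μ ν ≤ c ↔ ∀ A, MeasurableSet A →
      μ A ≤ ν A + ENNReal.ofReal c ∧ ν A ≤ μ A + ENNReal.ofReal c := by
  have toReal_sub_le_iff : ∀ a b : ℝ≥0∞, a ≠ ∞ → b ≠ ∞ →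
      (a.toReal - b.toReal ≤ c ↔ a ≤ b + ENNReal.ofReal c) := fun a b ha hb => by
    rw [sub_le_iff_le_add', ← ENNReal.toReal_le_toReal ha (by finiteness),
      ENNReal.toReal_add hb (by simp), ENNReal.toReal_ofReal hc]
  rw [tvDist, ciSup_le_iff (bddAbove_range_abs_sub_toReal μ ν), Subtype.forall]
  refine forall₂_congr fun A _ => ?_
  rw [abs_sub_le_iff]
  exact and_congr (toReal_sub_le_iff _ _ (measure_ne_top _ _) (measure_ne_top _ _))
    (toReal_sub_le_iff _ _ (measure_ne_top _ _) (measure_ne_top _ _))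

lemma tvDist_comm : tvDist μ ν = tvDist ν μ := by
  simp only [tvDist, abs_sub_comm]

variable [IsFiniteMeasure μ] [IsFiniteMeasure ν]

lemma tvDist_nonneg : 0 ≤ tvDist μ ν :=
  (abs_nonneg _).trans <| le_ciSup (bddAbove_range_abs_sub_toReal μ ν) ⟨∅, .empty⟩

lemma tvDist_self : tvDist μ μ = 0 :=
  le_antisymm ((tvDist_le_iff μ μ le_rfl).2 fun _ _ => by simp) (tvDist_nonneg μ μ)

lemma apply_le_add_tvDist {A : Set Θ} (hA : MeasurableSet A) :
    μ A ≤ ν A + ENNReal.ofReal (tvDist μ ν) :=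
  ((tvDist_le_iff μ ν (tvDist_nonneg μ ν)).1 le_rfl A hA).1

lemma tvDist_triangle (κ : Measure Θ) [IsFiniteMeasure κ] :
    tvDist μ ν ≤ tvDist μ κ + tvDist κ ν := by
  refine ciSup_le fun A => ?_
  exact (abs_sub_le _ _ _).trans <| add_le_add
    (le_ciSup (bddAbove_range_abs_sub_toReal μ κ) A)
    (le_ciSup (bddAbove_range_abs_sub_toReal κ ν) A)

end TotalVariation

section Kernel

variable {Θ : Type*} [MeasurableSpace Θ]

lemma lintegral_le_lintegral_add_of_le {μ ν : Measure Θ} [IsFiniteMeasure ν] (hνμ : ν ≤ μ)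
    {f : Θ → ℝ≥0∞} (hf : ∀ x, f x ≤ 1) :
    ∫⁻ x, f x ∂μ ≤ ∫⁻ x, f x ∂ν + (μ Set.univ - ν Set.univ) := by
  calc ∫⁻ x, f x ∂μ = ∫⁻ x, f x ∂ν + ∫⁻ x, f x ∂(μ - ν) := by
        rw [← lintegral_add_measure, add_comm ν, Measure.sub_add_cancel_of_le hνμ]
    _ ≤ ∫⁻ x, f x ∂ν + ∫⁻ _, 1 ∂(μ - ν) := by gcongr with x; exact hf x
    _ = ∫⁻ x, f x ∂ν + (μ Set.univ - ν Set.univ) := by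
        rw [lintegral_one, Measure.sub_apply .univ hνμ]

/- On a Hahn set `S` for `μ - ν` the integral of `f ≤ 1` gains at most `μ S - ν S`, and on `Sᶜ`
it gains nothing. -/
lemma lintegral_le_lintegral_add_tvDist (μ ν : Measure Θ) [IsFiniteMeasure μ]
    [IsFiniteMeasure ν] {f : Θ → ℝ≥0∞} (hf : ∀ x, f x ≤ 1) :
    ∫⁻ x, f x ∂μ ≤ ∫⁻ x, f x ∂ν + ENNReal.ofReal (tvDist μ ν) := by
  obtain ⟨S, hS, hνμ, hμν⟩ := hahn_decomposition μ ν
  have restrict_le {μ ν : Measure Θ} {s : Set Θ} (hs : MeasurableSet s)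
      (h : ∀ t, MeasurableSet t → t ⊆ s → ν t ≤ μ t) : ν.restrict s ≤ μ.restrict s :=
    Measure.le_iff.2 fun t ht => by
      simpa only [Measure.restrict_apply ht] using h _ (ht.inter hs) Set.inter_subset_right
  have hS_le : μ S - ν S ≤ ENNReal.ofReal (tvDist μ ν) :=
    tsub_le_iff_left.2 (apply_le_add_tvDist μ ν hS)
  calc ∫⁻ x, f x ∂μ = ∫⁻ x in S, f x ∂μ + ∫⁻ x in Sᶜ, f x ∂μ := (lintegral_add_compl f hS).symm
    _ ≤ (∫⁻ x in S, f x ∂ν + (μ S - ν S)) + ∫⁻ x in Sᶜ, f x ∂ν := by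
        refine add_le_add ?_ (lintegral_mono' (restrict_le hS.compl hμν) le_rfl)
        simpa only [Measure.restrict_apply_univ] using
          lintegral_le_lintegral_add_of_le (restrict_le hS hνμ) hf
    _ ≤ ∫⁻ x, f x ∂ν + ENNReal.ofReal (tvDist μ ν) := by
        rw [add_right_comm, lintegral_add_compl f hS]
        gcongr

lemma tvDist_bind_le (μ ν : Measure Θ) [IsFiniteMeasure μ] [IsFiniteMeasure ν]
    (K : Kernel Θ Θ) [IsMarkovKernel K] :
    tvDist (μ.bind K) (ν.bind K) ≤ tvDist μ ν := by
  refine (tvDist_le_iff _ _ (tvDist_nonneg μ ν)).2 fun A hA => ?_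
  simp only [Measure.bind_apply hA K.aemeasurable]
  exact ⟨lintegral_le_lintegral_add_tvDist μ ν fun _ => prob_le_one,
    tvDist_comm μ ν ▸ lintegral_le_lintegral_add_tvDist ν μ fun _ => prob_le_one⟩

lemma tvDist_bind_le_of_forall_tvDist_le (μ : Measure Θ) [IsProbabilityMeasure μ]
    (K L : Kernel Θ Θ) [IsMarkovKernel K] [IsMarkovKernel L] {ε : ℝ} (hε : 0 ≤ ε)
    (hKL : ∀ θ, tvDist (K θ) (L θ) ≤ ε) :
    tvDist (μ.bind K) (μ.bind L) ≤ ε := by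
  refine (tvDist_le_iff _ _ hε).2 fun A hA => ?_
  have hpt θ := (tvDist_le_iff _ _ hε).1 (hKL θ) A hA
  have integrate {f g : Θ → ℝ≥0∞} (h : ∀ θ, f θ ≤ g θ + ENNReal.ofReal ε) :
      ∫⁻ θ, f θ ∂μ ≤ ∫⁻ θ, g θ ∂μ + ENNReal.ofReal ε :=
    calc ∫⁻ θ, f θ ∂μ ≤ ∫⁻ θ, (g θ + ENNReal.ofReal ε) ∂μ := lintegral_mono h
      _ = ∫⁻ θ, g θ ∂μ + ENNReal.ofReal ε := by
        rw [lintegral_add_right _ measurable_const, lintegral_const, measure_univ, mul_one]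
  simp only [Measure.bind_apply hA K.aemeasurable, Measure.bind_apply hA L.aemeasurable]
  exact ⟨integrate fun θ => (hpt θ).1, integrate fun θ => (hpt θ).2⟩

end Kernel

section nStep

variable {Θ : Type*} [MeasurableSpace Θ]

instance (K : Kernel Θ Θ) [IsMarkovKernel K] (n : ℕ) : IsMarkovKernel (nStep K n) := by
  induction n with
  | zero => rw [nStep]; infer_instance
  | succ n _ => rw [nStep]; infer_instance

lemma nStep_succ_apply (K : Kernel Θ Θ) (n : ℕ) (θ : Θ) :
    nStep K (n + 1) θ = (nStep K n θ).bind K := by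
  rw [nStep, Kernel.comp_apply]

lemma tvDist_nStep_le (K L : Kernel Θ Θ) [IsMarkovKernel K] [IsMarkovKernel L]
    {ε : ℝ} (hε : 0 ≤ ε) (hKL : ∀ θ, tvDist (K θ) (L θ) ≤ ε) (θ₀ : Θ) (n : ℕ) :
    tvDist (nStep L n θ₀) (nStep K n θ₀) ≤ n * ε := by
  induction n with
  | zero => simp [nStep, tvDist_self]
  | succ n ih =>
    set μ := nStep L n θ₀
    set ν := nStep K n θ₀
    rw [nStep_succ_apply, nStep_succ_apply]
    calc tvDist (μ.bind L) (ν.bind K)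
        ≤ tvDist (μ.bind L) (μ.bind K) + tvDist (μ.bind K) (ν.bind K) := tvDist_triangle _ _ _
      _ ≤ ε + n * ε := by
        gcongr
        · rw [tvDist_comm]
          exact tvDist_bind_le_of_forall_tvDist_le μ K L hε hKL
        · exact (tvDist_bind_le μ ν K).trans ih
      _ = (n + 1 : ℕ) * ε := by push_cast; ring

end nStep

theorem stmt3_general {Θ : Type*} [MeasurableSpace Θ]
    (T That : Kernel Θ Θ) [IsMarkovKernel T] [IsMarkovKernel That]
    (π : Measure Θ) [IsProbabilityMeasure π]
    (ρ : ℝ)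
    (θ₀ : Θ)
    (hgeo : ∀ n : ℕ, 1 ≤ n → tvDist (nStep T n θ₀) π ≤ ρ ^ n)
    (ε : ℝ) (hε : 0 ≤ ε)
    (hclose : ∀ θ : Θ, tvDist (T θ) (That θ) ≤ ε) :
    ∀ n : ℕ, 1 ≤ n → tvDist (nStep That n θ₀) π ≤ ρ ^ n + n * ε := by
  intro n hn
  calc tvDist (nStep That n θ₀) π
      ≤ tvDist (nStep That n θ₀) (nStep T n θ₀) + tvDist (nStep T n θ₀) π :=
        tvDist_triangle _ _ _
    _ ≤ n * ε + ρ ^ n := add_le_add (tvDist_nStep_le T That hε hclose θ₀ n) (hgeo n hn)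
    _ = ρ ^ n + n * ε := add_comm _ _

/-- Perturbation bound: if `T` is geometrically ergodic towards its invariant
distribution `π` with rate `ρ`, and `T̂` is uniformly `ε`-close to `T` in total
variation, then `‖T̂ⁿ(θ₀,·) − π‖_TV ≤ ρⁿ + n·ε` for all `n ≥ 1`. -/
theorem stmt3 {Θ : Type*} [MeasurableSpace Θ]
    (T That : Kernel Θ Θ) [IsMarkovKernel T] [IsMarkovKernel That]
    (π : Measure Θ) [IsProbabilityMeasure π]
    (hinv : π.bind (fun θ => T θ) = π)
    (ρ : ℝ) (hρ0 : 0 < ρ) (hρ1 : ρ < 1)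
    (θ₀ : Θ)
    (hgeo : ∀ n : ℕ, 1 ≤ n → tvDist (nStep T n θ₀) π ≤ ρ ^ n)
    (ε : ℝ) (hε : 0 ≤ ε)
    (hclose : ∀ θ : Θ, tvDist (T θ) (That θ) ≤ ε) :
    ∀ n : ℕ, 1 ≤ n → tvDist (nStep That n θ₀) π ≤ ρ ^ n + n * ε :=
  stmt3_general T That π ρ θ₀ hgeo ε hε hclose
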